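/- Let 𝒞 be a simple circuit in Z², let 𝒳 be the set of vertices of Z² strictly inside 𝒞 (not including the vertices of 𝒞), and let Δ be the union of the crosses of the vertices of 𝒳. Let τ ∈ Ω^SI be a boundary condition in which the crosses of all vertices of 𝒞 are open. Then for all α > 0 and q > 0, the restriction to Δ of the superimposed measure P^{SI,τ}_{Δ,α,q} equals the restriction to Δ of the wired-wired measure P^{SI,11}_{Δ,α,q}. -/

import Mathlib

open MeasureTheory Filter Topology
open scoped ENNReal

namespace SixVertex

/-- Vertices of `ℤ²`. -/
abbrev Vx : Type := ℤ × ℤ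
/-- Faces of `ℤ²`, i.e. elements of `(ℤ²)* = ℤ² + (1/2,1/2)`; the face `p` corresponds to the
point `p + (1/2,1/2)`, i.e. to the unit square with corners `p`, `p+(1,0)`, `p+(0,1)`, `p+(1,1)`. -/
abbrev Face : Type := ℤ × ℤ

/-- `ℓ¹` (= graph) distance between faces in `(ℤ²)*`. -/
def fdist (p q : Face) : ℕ := (p.1 - q.1).natAbs + (p.2 - q.2).natAbs

/-- `ℓ¹` (= graph) distance between vertices of `ℤ²`. -/
def vdist (x y : Vx) : ℕ := (x.1 - y.1).natAbs + (x.2 - y.2).natAbs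

/-- Adjacency in `ℤ²` (or in `(ℤ²)*`). -/
def VAdj (x y : Vx) : Prop := vdist x y = 1

/-- The diagonal edges `E(𝕃) ∪ E(𝕃*)`, encoded as pairs `(x, b)` where `x ∈ ℤ²` is the vertex
of `ℤ²` the edge passes through, and `b` tells which of the two diagonals at `x` it is.
The cross at a vertex `x` consists of the two edges `(x, false)` and `(x, true)`. -/
abbrev Edge : Type := Vx × Bool

/-- The two endpoints (faces) of a diagonal edge: `(x, false)` joins the faces `x - (1,1)` and
`x` (the two faces at `x` of the parity of `x`), while `(x, true)` joins `x - (1,0)` and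
`x - (0,1)`. -/
def ep (e : Edge) : Face × Face :=
  if e.2 then (e.1 - (1, 0), e.1 - (0, 1)) else (e.1 - (1, 1), e.1)

/-- The edge `e` belongs to `E(𝕃)` (otherwise it belongs to `E(𝕃*)`). -/
def inL (e : Edge) : Prop := (Even (e.1.1 + e.1.2) ↔ e.2 = false)

/-- Configurations `η ∈ {0,1}^{E(𝕃) ∪ E(𝕃*)}` (the pair `(η⁰, η¹)` is encoded as a single
function on all diagonal edges). -/
abbrev SIConf : Type := Edge → Bool

/-- The cross at `x` is open in `η`. -/
def OpenCross (η : SIConf) (x : Vx) : Prop := η (x, false) = true ∧ η (x, true) = true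

/-- No cross is closed in `η`, i.e. `η` is a superimposed configuration (`η ∈ Ω^SI`). -/
def NoClosedCross (η : SIConf) : Prop := ∀ x : Vx, η (x, false) = true ∨ η (x, true) = true

/-- Two faces joined by an open edge of `η`. -/
def OpenAdj (η : SIConf) (p q : Face) : Prop :=
  ∃ e : Edge, η e = true ∧ (ep e = (p, q) ∨ ep e = (q, p))

/-- Connectivity by open paths. -/
def ConnectedIn (η : SIConf) : Face → Face → Prop := Relation.ReflTransGen (OpenAdj η)

/-- The cluster of the face `p` in `η`. -/
def cluster (η : SIConf) (p : Face) : Set Face := {q | ConnectedIn η p q}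

/-- The face `p` is incident to some edge of `Δ`. -/
def TouchesDelta (Δ : Set Edge) (p : Face) : Prop := ∃ e ∈ Δ, (ep e).1 = p ∨ (ep e).2 = p

/-- `N_Δ(η)`: the number of open crosses of `η` having an edge in `Δ`. -/
noncomputable def NDelta (Δ : Set Edge) (η : SIConf) : ℕ :=
  Set.ncard {x : Vx | OpenCross η x ∧ ((x, false) ∈ Δ ∨ (x, true) ∈ Δ)}

/-- `k_Δ(η) = k_Δ(η⁰) + k_Δ(η¹)`: the total number of clusters of `η` (equivalently, of `η⁰`
in `𝕃` plus those of `η¹` in `𝕃*`, since open edges never join faces of different parity)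
containing a face incident to an edge of `Δ`. -/
noncomputable def kDelta (Δ : Set Edge) (η : SIConf) : ℕ :=
  Set.ncard {C : Set Face | ∃ p : Face, TouchesDelta Δ p ∧ C = cluster η p}

/-- `η` is a superimposed configuration agreeing with `τ` off `Δ` (`η ∈ Ω^{SI,τ}_Δ`). -/
def SIok (Δ : Set Edge) (τ : SIConf) (η : SIConf) : Prop :=
  NoClosedCross η ∧ ∀ e ∉ Δ, η e = τ e

/-- The weight `α^{N_Δ(η)} q^{k_Δ(η)}` of the superimposed model. -/
noncomputable def SIweight (Δ : Set Edge) (α q : ℝ) (η : SIConf) : ℝ≥0∞ :=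
  ENNReal.ofReal (α ^ NDelta Δ η * q ^ kDelta Δ η)

/-- The finite-volume superimposed measure `P^{SI,τ}_{Δ,α,q}`. -/
noncomputable def SIfin (Δ : Set Edge) (α q : ℝ) (τ : SIConf) : Measure SIConf :=
  (∑' η : {η : SIConf // SIok Δ τ η}, SIweight Δ α q η.1)⁻¹ •
    Measure.sum (fun η : {η : SIConf // SIok Δ τ η} => SIweight Δ α q η.1 • Measure.dirac η.1)

/-- The all-open ("wired-wired", `11`) boundary condition. -/
def wiredwired : SIConf := fun _ => true

/-! ### Diamond domains -/

/-- The diamond `Λ = {u : dist(u,v) ≤ n}` of faces. -/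
def diamond (v : Face) (n : ℕ) : Set Face := {u | fdist u v ≤ n}

/-- `(v, n)` determines a diamond domain: `v ∈ 𝕃` and `n` a positive even integer. -/
def IsDiamond (v : Face) (n : ℕ) : Prop := Even (v.1 + v.2) ∧ 0 < n ∧ Even n

/-- The edge of `E(𝕃)` in the cross at `x`. -/
def LEdgeAt (x : Vx) : Edge := if Even (x.1 + x.2) then (x, false) else (x, true)

/-- `Δ(Λ)`: edges of `𝕃` with both endpoints in `Λ`, together with their dual edges
(equivalently: the full crosses whose `𝕃`-edge has both endpoints in `Λ`). -/
def deltaOf (v : Face) (n : ℕ) : Set Edge :=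
  {e | (ep (LEdgeAt e.1)).1 ∈ diamond v n ∧ (ep (LEdgeAt e.1)).2 ∈ diamond v n}

/-! ### Spin configurations -/

/-- Spin configurations on the faces; `true` is the spin `+`, `false` the spin `-`. -/
abbrev SpinConf : Type := Face → Bool

/-- The ice rule: at each vertex of `ℤ²`, at least one of the two diagonals consists of
equal spins. -/
def IceRule (σ : SpinConf) : Prop :=
  ∀ x : Vx, σ (x - (1, 1)) = σ x ∨ σ (x - (1, 0)) = σ (x - (0, 1))

/-- `x` is a saddle point of `σ`: both diagonals at `x` have constant spin. -/
def Saddle (σ : SpinConf) (x : Vx) : Prop :=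
  σ (x - (1, 1)) = σ x ∧ σ (x - (1, 0)) = σ (x - (0, 1))

/-- The face `p` is incident to the vertex `x` of `ℤ²` (i.e. `x` is a corner of `p`). -/
def FaceInc (p : Face) (x : Vx) : Prop :=
  ∃ a ∈ ({0, 1} : Set ℤ), ∃ b ∈ ({0, 1} : Set ℤ), p = x - (a, b)

/-- Vertices of `𝛬̂`: vertices of `ℤ²` on or inside the circuit `∂†Λ`, i.e. corners of
faces of `Λ`. -/
def HatVert (v : Face) (n : ℕ) (x : Vx) : Prop := ∃ p ∈ diamond v n, FaceInc p x

/-- Internal vertices of `𝛬̂`: vertices all of whose four incident `ℤ²`-edges belong to the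
induced subgraph `𝛬̂`. -/
def InternalVert (v : Face) (n : ℕ) (x : Vx) : Prop :=
  HatVert v n x ∧ ∀ y : Vx, VAdj x y → HatVert v n y

/-- `#saddle_Λ(σ)`: the number of saddle points of `σ` among internal vertices of `𝛬̂`. -/
noncomputable def saddleCount (v : Face) (n : ℕ) (σ : SpinConf) : ℕ :=
  Set.ncard {x : Vx | InternalVert v n x ∧ Saddle σ x}

/-- `Ω^{spin,ij}_Λ`: spin configurations satisfying the ice rule, equal to `i` on the outer
boundary of `Λ` and on all of `𝕃*` outside `Λ`, and equal to `j` on the inner boundary of `Λ`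
and on all of `𝕃` outside `Λ`.  (All faces at distance `≥ n` from the center receive the
boundary spin of their sublattice.) -/
def OmegaSpin (v : Face) (n : ℕ) (i j : Bool) (σ : SpinConf) : Prop :=
  IceRule σ ∧ ∀ p : Face, n ≤ fdist p v → σ p = (if Even (p.1 + p.2) then j else i)

/-- The weight `c^{#saddle_Λ(σ)}`. -/
noncomputable def spinWeight (v : Face) (n : ℕ) (c : ℝ) (σ : SpinConf) : ℝ≥0∞ :=
  ENNReal.ofReal (c ^ saddleCount v n σ)

/-- The finite-volume spin measure `P^{spin,ij}_{Λ,c}`. -/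
noncomputable def spinFin (v : Face) (n : ℕ) (c : ℝ) (i j : Bool) : Measure SpinConf :=
  (∑' σ : {σ : SpinConf // OmegaSpin v n i j σ}, spinWeight v n c σ.1)⁻¹ •
    Measure.sum (fun σ : {σ : SpinConf // OmegaSpin v n i j σ} =>
      spinWeight v n c σ.1 • Measure.dirac σ.1)

/-- Compatibility `σ ∼ η`: every open edge of `η` has endpoints with equal spins. -/
def Compat (σ : SpinConf) (η : SIConf) : Prop :=
  ∀ e : Edge, η e = true → σ (ep e).1 = σ (ep e).2

/-! ### Bernoulli site percolation on `ℤ²` and its critical probability -/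

/-- `ν` is the law of i.i.d. Bernoulli(`p`) site percolation on `ℤ²`. -/
def IsBernoulliField (p : ℝ) (ν : Measure (Vx → Bool)) : Prop :=
  IsProbabilityMeasure ν ∧
    ∀ (S : Finset Vx) (s : Vx → Bool),
      ν {ω | ∀ x ∈ S, ω x = s x} =
        ∏ x ∈ S, (if s x = true then ENNReal.ofReal p else ENNReal.ofReal (1 - p))

/-- Site-percolation adjacency: neighbouring open sites. -/
def SiteOpenAdj (ω : Vx → Bool) (x y : Vx) : Prop := VAdj x y ∧ ω x = true ∧ ω y = true

/-- The open cluster of a site. -/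
def siteCluster (ω : Vx → Bool) (x : Vx) : Set Vx :=
  {y | Relation.ReflTransGen (SiteOpenAdj ω) x y}

/-- The critical probability `p_c` of Bernoulli site percolation on `ℤ²`: the supremum of
`p ∈ [0,1]` for which Bernoulli(`p`) site percolation a.s. has no infinite open cluster. -/
noncomputable def pcSite : ℝ :=
  sSup {p : ℝ | 0 ≤ p ∧ p ≤ 1 ∧ ∀ ν : Measure (Vx → Bool), IsBernoulliField p ν →
    ν {ω | ∃ x, ω x = true ∧ (siteCluster ω x).Infinite} = 0}

/-! ### Infinite-volume limits -/

/-- A sequence of diamond domains increasing to `(ℤ²)*`. -/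
def DiamondExhaustion (v : ℕ → Face) (n : ℕ → ℕ) : Prop :=
  (∀ k, IsDiamond (v k) (n k)) ∧
  (∀ k, diamond (v k) (n k) ⊆ diamond (v (k + 1)) (n (k + 1))) ∧
  (∀ u : Face, ∃ k, u ∈ diamond (v k) (n k))

/-- `P` is the weak limit of the finite-volume superimposed measures with boundary condition
`τ` along any sequence of diamond domains increasing to `(ℤ²)*`. -/
def IsSILimitFor (α q : ℝ) (τ : SIConf) (P : Measure SIConf) : Prop :=
  ∀ (v : ℕ → Face) (n : ℕ → ℕ), DiamondExhaustion v n →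
    ∀ f : SIConf → ℝ, Continuous f → (∃ M, ∀ η, |f η| ≤ M) →
      Tendsto (fun k => ∫ η, f η ∂(SIfin (deltaOf (v k) (n k)) α q τ)) atTop
        (nhds (∫ η, f η ∂P))

/-- `P` is the infinite-volume superimposed measure `P^{SI}_{α,q}`: the common weak limit of
the finite-volume measures over all boundary conditions. -/
def IsSILimit (α q : ℝ) (P : Measure SIConf) : Prop :=
  IsProbabilityMeasure P ∧ ∀ τ : SIConf, NoClosedCross τ → IsSILimitFor α q τ P

/-- `P` is the weak limit `P^{spin,ij}_c` of the finite-volume spin measures along any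
sequence of diamond domains increasing to `(ℤ²)*`. -/
def IsSpinLimit (c : ℝ) (i j : Bool) (P : Measure SpinConf) : Prop :=
  IsProbabilityMeasure P ∧
    ∀ (v : ℕ → Face) (n : ℕ → ℕ), DiamondExhaustion v n →
      ∀ f : SpinConf → ℝ, Continuous f → (∃ M, ∀ σ, |f σ| ≤ M) →
        Tendsto (fun k => ∫ σ, f σ ∂(spinFin (v k) (n k) c i j)) atTop (nhds (∫ σ, f σ ∂P))

end SixVertex

namespace SixVertex

/-- A simple circuit in `ℤ²`, given as a cyclically-indexed injective sequence of vertices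
with consecutive vertices adjacent. -/
def IsSimpleCircuit {m : ℕ} (C : ZMod m → Vx) : Prop :=
  Function.Injective C ∧ ∀ k : ZMod m, VAdj (C k) (C (k + 1))

/-- Adjacency in `ℤ²` avoiding the set `S`. -/
def AvoidAdj (S : Set Vx) (x y : Vx) : Prop := VAdj x y ∧ x ∉ S ∧ y ∉ S

/-- The vertices strictly inside the circuit `C`: those not on `C` whose connected component
in `ℤ² ∖ C` is finite. -/
def insideOf {m : ℕ} (C : ZMod m → Vx) : Set Vx :=
  {x | x ∉ Set.range C ∧ {y | Relation.ReflTransGen (AvoidAdj (Set.range C)) x y}.Finite}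

/-!
Resetting a configuration to be open outside the crosses of `𝒳` is a bijection from the
configurations with boundary condition `τ` onto those with boundary condition `11` (its inverse
resets to `τ`), and it does not change the restriction to `Δ`. It also preserves the weight:
`N_Δ` only sees `Δ`, and an open path of the wired configuration between faces touching `Δ` can
leave them only through faces at a vertex of `𝒞`, since a face with corners inside and outside
`𝒳` has a corner on `𝒞`. As the crosses of `𝒞` are open in `τ`, all faces of one parity around
`𝒞` are already connected, so the clusters meeting `Δ` are the same and `k_Δ` is unchanged.
-/

theorem _root_.Set.ncard_image_eq_ncard_image_of_iff {α β γ : Type*} {f : α → β} {g : α → γ}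
    {s : Set α} (h : ∀ a ∈ s, ∀ b ∈ s, f a = f b ↔ g a = g b) :
    (f '' s).ncard = (g '' s).ncard := by
  have hfst : Set.InjOn Prod.fst ((fun a => (f a, g a)) '' s) := by
    rintro _ ⟨a, ha, rfl⟩ _ ⟨b, hb, rfl⟩ hab
    exact Prod.ext hab ((h a ha b hb).mp hab)
  have hsnd : Set.InjOn Prod.snd ((fun a => (f a, g a)) '' s) := by
    rintro _ ⟨a, ha, rfl⟩ _ ⟨b, hb, rfl⟩ hab
    exact Prod.ext ((h a ha b hb).mpr hab) hab
  have hf : f '' s = Prod.fst '' ((fun a => (f a, g a)) '' s) := by rw [Set.image_image]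
  have hg : g '' s = Prod.snd '' ((fun a => (f a, g a)) '' s) := by rw [Set.image_image]
  rw [hf, hg, hfst.ncard_image, hsnd.ncard_image]

/-- The sublattice of a face: `𝕃` is the even and `𝕃*` the odd one. -/
def parity (p : Face) : ℤ := (p.1 + p.2) % 2

lemma faceInc_iff {p : Face} {x : Vx} :
    FaceInc p x ↔ p = x - (1, 1) ∨ p = x ∨ p = x - (1, 0) ∨ p = x - (0, 1) := by
  simp only [FaceInc, Set.mem_insert_iff, Set.mem_singleton_iff, exists_eq_or_imp,
    exists_eq_left, Prod.mk_zero_zero, sub_zero]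
  tauto

lemma faceInc_ep_fst (e : Edge) : FaceInc (ep e).1 e.1 := by
  rcases e with ⟨x, _ | _⟩ <;> simp [ep, faceInc_iff]

lemma faceInc_ep_snd (e : Edge) : FaceInc (ep e).2 e.1 := by
  rcases e with ⟨x, _ | _⟩ <;> simp [ep, faceInc_iff]

lemma parity_ep (e : Edge) : parity (ep e).1 = parity (ep e).2 := by
  rcases e with ⟨x, _ | _⟩ <;> simp [ep, parity] <;> omega

lemma VAdj.symm {x y : Vx} (h : VAdj x y) : VAdj y x := by
  unfold VAdj vdist at *
  omega

lemma VAdj.exists_faceInc {x y : Vx} (h : VAdj x y) (s : Face) :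
    ∃ u, FaceInc u x ∧ FaceInc u y ∧ parity u = parity s := by
  have hdir : (y.1 = x.1 + 1 ∧ y.2 = x.2) ∨ (y.1 = x.1 - 1 ∧ y.2 = x.2) ∨
      (y.1 = x.1 ∧ y.2 = x.2 + 1) ∨ (y.1 = x.1 ∧ y.2 = x.2 - 1) := by
    unfold VAdj vdist at h
    omega
  simp only [faceInc_iff, parity, Prod.ext_iff, Prod.fst_sub, Prod.snd_sub, sub_zero]
  rcases hdir with ⟨h₁, h₂⟩ | ⟨h₁, h₂⟩ | ⟨h₁, h₂⟩ | ⟨h₁, h₂⟩ <;>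
    by_cases hs : (s.1 + s.2) % 2 = (x.1 + x.2) % 2 <;>
    first
    | (refine ⟨(x.1 - 1, x.2 - 1), ?_, ?_, ?_⟩ <;> dsimp only <;> omega)
    | (refine ⟨(x.1, x.2), ?_, ?_, ?_⟩ <;> dsimp only <;> omega)
    | (refine ⟨(x.1 - 1, x.2), ?_, ?_, ?_⟩ <;> dsimp only <;> omega)
    | (refine ⟨(x.1, x.2 - 1), ?_, ?_, ?_⟩ <;> dsimp only <;> omega)

section Connectivity

variable {η η' : SIConf} {p q : Face}

lemma OpenAdj.symm (h : OpenAdj η p q) : OpenAdj η q p :=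
  let ⟨e, he, hpq⟩ := h
  ⟨e, he, hpq.symm⟩

instance (η : SIConf) : Std.Symm (OpenAdj η) := ⟨fun _ _ => OpenAdj.symm⟩

lemma ConnectedIn.symm (h : ConnectedIn η p q) : ConnectedIn η q p :=
  Std.Symm.symm (r := Relation.ReflTransGen (OpenAdj η)) p q h

lemma ConnectedIn.mono (hle : ∀ e, η e = true → η' e = true) (h : ConnectedIn η p q) :
    ConnectedIn η' p q :=
  Relation.ReflTransGen.mono (fun _ _ ⟨e, he, hpq⟩ => ⟨e, hle e he, hpq⟩) _ _ h

lemma cluster_eq_cluster_iff : cluster η p = cluster η q ↔ ConnectedIn η p q := by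
  refine ⟨fun h => ?_, fun h => Set.ext fun r =>
    ⟨Relation.ReflTransGen.trans h.symm, Relation.ReflTransGen.trans h⟩⟩
  have hq : q ∈ cluster η q := Relation.ReflTransGen.refl
  rwa [← h] at hq

lemma OpenCross.connectedIn {x : Vx} (hx : OpenCross η x) (hp : FaceInc p x)
    (hq : FaceInc q x) (hpq : parity p = parity q) : ConnectedIn η p q := by
  have h₀ : OpenAdj η (x - (1, 1)) x := ⟨(x, false), hx.1, .inl rfl⟩
  have h₁ : OpenAdj η (x - (1, 0)) (x - (0, 1)) := ⟨(x, true), hx.2, .inl rfl⟩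
  rw [faceInc_iff] at hp hq
  rcases hp with rfl | rfl | rfl | rfl <;> rcases hq with rfl | rfl | rfl | rfl <;>
    first
    | exact .refl
    | exact .single h₀
    | exact .single h₀.symm
    | exact .single h₁
    | exact .single h₁.symm
    | (simp [parity] at hpq; omega)

end Connectivity

section Circuit

variable {m : ℕ} {C : ZMod m → Vx}

lemma connectedIn_of_faceInc_circuit {η : SIConf} (hadj : ∀ k, VAdj (C k) (C (k + 1)))
    (hoC : ∀ k, OpenCross η (C k)) {s t : Face} {k j : ZMod m} (hs : FaceInc s (C k))
    (ht : FaceInc t (C j)) (hst : parity s = parity t) : ConnectedIn η s t := by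
  have step : ∀ x y, VAdj x y → OpenCross η y →
      (∀ t, FaceInc t x → parity s = parity t → ConnectedIn η s t) →
      ∀ t, FaceInc t y → parity s = parity t → ConnectedIn η s t := by
    intro x y hxy hy hx t ht hst
    obtain ⟨u, hux, huy, hus⟩ := hxy.exists_faceInc s
    exact Relation.ReflTransGen.trans (hx u hux hus.symm) (hy.connectedIn huy ht (hus.trans hst))
  have spread : ∀ z : ℤ, ∀ t, FaceInc t (C (k + z)) → parity s = parity t →
      ConnectedIn η s t := by
    intro z
    induction z using Int.induction_on with
    | zero => simpa using fun t : Face => (hoC k).connectedIn (q := t) hs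
    | succ i ih => exact step _ _ (by simpa [add_assoc] using hadj (k + i)) (hoC _) ih
    | pred i ih =>
      exact step _ _ (by simpa [sub_eq_add_neg, add_assoc] using (hadj (k + (-i - 1))).symm)
        (hoC _) ih
  obtain ⟨z, hz⟩ := ZMod.intCast_surjective (j - k)
  exact spread z t (by rwa [hz, add_sub_cancel]) hst

lemma reflTransGen_avoidAdj_of_faceInc {S : Set Vx} {p : Face}
    (hS : ∀ w, FaceInc p w → w ∉ S) {u w : Vx} (hu : FaceInc p u) (hw : FaceInc p w) :
    Relation.ReflTransGen (AvoidAdj S) u w := by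
  have corner : ∀ v : Vx, FaceInc p v ↔
      (v.1 = p.1 ∨ v.1 = p.1 + 1) ∧ (v.2 = p.2 ∨ v.2 = p.2 + 1) := by
    intro v
    simp only [faceInc_iff, Prod.ext_iff, Prod.fst_sub, Prod.snd_sub]
    omega
  have hop : ∀ v v' : Vx, FaceInc p v → FaceInc p v' → v.1 = v'.1 ∨ v.2 = v'.2 →
      Relation.ReflTransGen (AvoidAdj S) v v' := by
    intro v v' hv hv' hline
    by_cases hvv' : v = v'
    · exact hvv' ▸ .refl
    refine .single ⟨?_, hS v hv, hS v' hv'⟩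
    rw [corner] at hv hv'
    rw [Prod.ext_iff] at hvv'
    unfold VAdj vdist
    omega
  have hmid : FaceInc p (w.1, u.2) := (corner _).mpr ⟨((corner w).mp hw).1, ((corner u).mp hu).2⟩
  exact (hop u _ hu hmid (.inr rfl)).trans (hop _ w hmid hw (.inl rfl))

lemma mem_insideOf_of_reflTransGen {x y : Vx} (hx : x ∈ insideOf C)
    (hxy : Relation.ReflTransGen (AvoidAdj (Set.range C)) x y) : y ∈ insideOf C := by
  refine ⟨?_, hx.2.subset fun z hz => hxy.trans hz⟩
  rcases hxy.cases_tail with rfl | ⟨w, -, hwy⟩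
  exacts [hx.1, hwy.2.2]

lemma exists_faceInc_circuit {p : Face} {x z : Vx} (hx : x ∈ insideOf C) (hz : z ∉ insideOf C)
    (hpx : FaceInc p x) (hpz : FaceInc p z) : ∃ k, FaceInc p (C k) := by
  by_contra! h
  have hS : ∀ w, FaceInc p w → w ∉ Set.range C := by
    rintro w hw ⟨k, rfl⟩
    exact h k hw
  exact hz (mem_insideOf_of_reflTransGen hx (reflTransGen_avoidAdj_of_faceInc hS hpx hpz))

end Circuit

lemma touchesDelta_iff {X : Set Vx} {p : Face} :
    TouchesDelta {e : Edge | e.1 ∈ X} p ↔ ∃ x ∈ X, FaceInc p x := by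
  constructor
  · rintro ⟨e, he, rfl | rfl⟩
    exacts [⟨e.1, he, faceInc_ep_fst e⟩, ⟨e.1, he, faceInc_ep_snd e⟩]
  · rintro ⟨x, hx, hp⟩
    rcases faceInc_iff.mp hp with rfl | rfl | rfl | rfl
    exacts [⟨(x, false), hx, .inl rfl⟩, ⟨(p, false), hx, .inr rfl⟩, ⟨(x, true), hx, .inl rfl⟩,
      ⟨(x, true), hx, .inr rfl⟩]

section Wiring

open Classical

variable {m : ℕ} {C : ZMod m → Vx} {η : SIConf}

lemma piecewise_crosses_of_mem {X : Set Vx} {τ : SIConf} {e : Edge} (he : e.1 ∈ X) :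
    {e : Edge | e.1 ∈ X}.piecewise η τ e = η e :=
  Set.piecewise_eq_of_mem _ _ _ he

/-- Invariant along an open path from `p` in the configuration wired outside the crosses of
`insideOf C`: the path can only leave the faces touching those crosses through faces at the
circuit. -/
def JoinedModCircuit (C : ZMod m → Vx) (η : SIConf) (p r : Face) : Prop :=
  parity p = parity r ∧
    (TouchesDelta {e : Edge | e.1 ∈ insideOf C} r → ConnectedIn η p r) ∧
    (¬ TouchesDelta {e : Edge | e.1 ∈ insideOf C} r →
      ∃ s k, FaceInc s (C k) ∧ parity p = parity s ∧ ConnectedIn η p s)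

lemma JoinedModCircuit.tail (hadj : ∀ k, VAdj (C k) (C (k + 1)))
    (hoC : ∀ k, OpenCross η (C k)) {p b c : Face} (hpb : JoinedModCircuit C η p b)
    (hbc : OpenAdj ({e : Edge | e.1 ∈ insideOf C}.piecewise η wiredwired) b c) :
    JoinedModCircuit C η p c := by
  obtain ⟨hpar, hin, hout⟩ := hpb
  obtain ⟨e, he, hebc⟩ := hbc
  obtain ⟨hb, hc, hbc⟩ : FaceInc b e.1 ∧ FaceInc c e.1 ∧ parity b = parity c := by
    rcases hebc with h | h <;> rw [Prod.ext_iff] at h <;> obtain ⟨rfl, rfl⟩ := h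
    exacts [⟨faceInc_ep_fst e, faceInc_ep_snd e, parity_ep e⟩,
      ⟨faceInc_ep_snd e, faceInc_ep_fst e, (parity_ep e).symm⟩]
  refine ⟨hpar.trans hbc, ?_⟩
  by_cases hX : e.1 ∈ insideOf C
  · have hηe : η e = true := by rwa [piecewise_crosses_of_mem hX] at he
    exact ⟨fun _ => Relation.ReflTransGen.tail (hin (touchesDelta_iff.mpr ⟨e.1, hX, hb⟩))
        ⟨e, hηe, hebc⟩,
      fun hTc => absurd (touchesDelta_iff.mpr ⟨e.1, hX, hc⟩) hTc⟩
  have circuit_of_touches : ∀ r, FaceInc r e.1 →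
      TouchesDelta {e : Edge | e.1 ∈ insideOf C} r → ∃ k, FaceInc r (C k) := fun r hr hT =>
    let ⟨_, hx, hrx⟩ := touchesDelta_iff.mp hT
    exists_faceInc_circuit hx hX hrx hr
  have anchor : ∃ s k, FaceInc s (C k) ∧ parity p = parity s ∧ ConnectedIn η p s := by
    by_cases hTb : TouchesDelta {e : Edge | e.1 ∈ insideOf C} b
    · obtain ⟨k, hk⟩ := circuit_of_touches b hb hTb
      exact ⟨b, k, hk, hpar, hin hTb⟩
    · exact hout hTb
  refine ⟨fun hTc => ?_, fun _ => anchor⟩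
  obtain ⟨s, k, hs, hps, hconn⟩ := anchor
  obtain ⟨j, hj⟩ := circuit_of_touches c hc hTc
  exact Relation.ReflTransGen.trans hconn
    (connectedIn_of_faceInc_circuit hadj hoC hs hj (hps.symm.trans (hpar.trans hbc)))

lemma connectedIn_piecewise_wiredwired_iff (hadj : ∀ k, VAdj (C k) (C (k + 1)))
    (hoC : ∀ k, OpenCross η (C k)) {p q : Face}
    (hp : TouchesDelta {e : Edge | e.1 ∈ insideOf C} p)
    (hq : TouchesDelta {e : Edge | e.1 ∈ insideOf C} q) :
    ConnectedIn ({e : Edge | e.1 ∈ insideOf C}.piecewise η wiredwired) p q ↔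
      ConnectedIn η p q := by
  refine ⟨fun h => ?_, ConnectedIn.mono fun e he => ?_⟩
  · suffices ∀ r, ConnectedIn ({e : Edge | e.1 ∈ insideOf C}.piecewise η wiredwired) p r →
        JoinedModCircuit C η p r from (this q h).2.1 hq
    intro r hr
    induction hr with
    | refl => exact ⟨rfl, fun _ => .refl, fun hn => absurd hp hn⟩
    | tail _ hbc ih => exact ih.tail hadj hoC hbc
  · by_cases hX : e.1 ∈ insideOf C <;> simp [Set.piecewise, hX, he, wiredwired]

lemma NDelta_eq_of_eqOn {X : Set Vx} {η η' : SIConf} (h : ∀ e : Edge, e.1 ∈ X → η e = η' e) :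
    NDelta {e : Edge | e.1 ∈ X} η = NDelta {e : Edge | e.1 ∈ X} η' := by
  unfold NDelta
  congr 1
  ext x
  simp only [Set.mem_ofPred_eq, or_self, OpenCross]
  exact and_congr_left fun hx => by rw [h _ hx, h _ hx]

lemma kDelta_eq_ncard_image (Δ : Set Edge) (η : SIConf) :
    kDelta Δ η = (cluster η '' {p | TouchesDelta Δ p}).ncard := by
  unfold kDelta
  congr 1
  ext
  simp [eq_comm]

lemma SIok.openCross_circuit {τ : SIConf} (hη : SIok {e : Edge | e.1 ∈ insideOf C} τ η)
    (hτC : ∀ k, OpenCross τ (C k)) (k : ZMod m) : OpenCross η (C k) := by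
  have hk : C k ∉ insideOf C := fun h => h.1 ⟨k, rfl⟩
  rw [OpenCross, hη.2 _ hk, hη.2 _ hk]
  exact hτC k

lemma SIweight_piecewise_wiredwired (hadj : ∀ k, VAdj (C k) (C (k + 1)))
    (hoC : ∀ k, OpenCross η (C k)) (α q : ℝ) :
    SIweight {e : Edge | e.1 ∈ insideOf C} α q
        ({e : Edge | e.1 ∈ insideOf C}.piecewise η wiredwired) =
      SIweight {e : Edge | e.1 ∈ insideOf C} α q η := by
  have hk : kDelta {e : Edge | e.1 ∈ insideOf C}
      ({e : Edge | e.1 ∈ insideOf C}.piecewise η wiredwired) =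
      kDelta {e : Edge | e.1 ∈ insideOf C} η := by
    rw [kDelta_eq_ncard_image, kDelta_eq_ncard_image]
    exact Set.ncard_image_eq_ncard_image_of_iff fun p hp q hq => by
      rw [cluster_eq_cluster_iff, cluster_eq_cluster_iff,
        connectedIn_piecewise_wiredwired_iff hadj hoC hp hq]
  rw [SIweight, SIweight, hk,
    NDelta_eq_of_eqOn (X := insideOf C) (η' := η) fun _ => piecewise_crosses_of_mem]

end Wiring

section BoundaryChange

open Classical

variable {X : Set Vx} {τ τ' : SIConf}

lemma SIok.piecewise {η : SIConf} (hη : SIok {e : Edge | e.1 ∈ X} τ η) (hτ' : NoClosedCross τ') :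
    SIok {e : Edge | e.1 ∈ X} τ' ({e : Edge | e.1 ∈ X}.piecewise η τ') := by
  refine ⟨fun x => ?_, fun e he => Set.piecewise_eq_of_notMem _ _ _ he⟩
  by_cases hx : x ∈ X
  · simpa [Set.piecewise, hx] using hη.1 x
  · simpa [Set.piecewise, hx] using hτ' x

noncomputable def changeBoundary (X : Set Vx) (hτ : NoClosedCross τ) (hτ' : NoClosedCross τ') :
    {η // SIok {e : Edge | e.1 ∈ X} τ η} ≃ {η // SIok {e : Edge | e.1 ∈ X} τ' η} where
  toFun η := ⟨_, η.2.piecewise hτ'⟩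
  invFun η := ⟨_, η.2.piecewise hτ⟩
  left_inv η := Subtype.ext <| funext fun e => by
    by_cases he : e.1 ∈ X <;> simp [Set.piecewise, he, η.2.2 e]
  right_inv η := Subtype.ext <| funext fun e => by
    by_cases he : e.1 ∈ X <;> simp [Set.piecewise, he, η.2.2 e]

end BoundaryChange

lemma map_SIfin_eq_of_equiv {β : Type*} [MeasurableSpace β] {Δ : Set Edge} {α q : ℝ}
    {τ τ' : SIConf} {f : SIConf → β} (hf : Measurable f)
    (e : {η // SIok Δ τ η} ≃ {η // SIok Δ τ' η})
    (hw : ∀ η, SIweight Δ α q (e η).1 = SIweight Δ α q η.1) (hfe : ∀ η, f (e η).1 = f η.1) :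
    (SIfin Δ α q τ).map f = (SIfin Δ α q τ').map f := by
  have hmap : ∀ σ : SIConf, (SIfin Δ α q σ).map f =
      (∑' η : {η // SIok Δ σ η}, SIweight Δ α q η.1)⁻¹ •
        Measure.sum fun η : {η // SIok Δ σ η} => SIweight Δ α q η.1 • Measure.dirac (f η.1) := by
    intro σ
    rw [SIfin, Measure.map_smul, Measure.map_sum hf.aemeasurable]
    simp only [Measure.map_smul, Measure.map_dirac' hf]
  rw [hmap, hmap, ← e.tsum_eq, ← Measure.sum_comp_equiv e]
  simp only [Function.comp_def, hw, hfe]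

theorem stmt_7_general (m : ℕ) (C : ZMod m → Vx) (hC : IsSimpleCircuit C)
    (α q : ℝ) (τ : SIConf) (hτ : NoClosedCross τ)
    (hτC : ∀ k : ZMod m, OpenCross τ (C k)) :
    Measure.map (fun η : SIConf => fun e : {e : Edge // e.1 ∈ insideOf C} => η e.1)
        (SIfin {e : Edge | e.1 ∈ insideOf C} α q τ) =
      Measure.map (fun η : SIConf => fun e : {e : Edge // e.1 ∈ insideOf C} => η e.1)
        (SIfin {e : Edge | e.1 ∈ insideOf C} α q wiredwired) := by
  have hwired : NoClosedCross wiredwired := fun _ => .inl rfl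
  refine map_SIfin_eq_of_equiv (measurable_pi_lambda _ fun e => measurable_pi_apply e.1)
    (changeBoundary (insideOf C) hτ hwired) (fun η => ?_) (fun η => ?_)
  · exact SIweight_piecewise_wiredwired hC.2 (η.2.openCross_circuit hτC) α q
  · funext e
    exact piecewise_crosses_of_mem e.2

/-- Let `𝒞` be a simple circuit in `ℤ²`, let `𝒳` be the set of vertices strictly inside it and
let `Δ` be the union of the crosses of the vertices of `𝒳`.  Let `τ ∈ Ω^SI` be a boundary
condition in which the crosses of all vertices of `𝒞` are open.  Then for all `α > 0` and
`q > 0`, the restriction to `Δ` of `P^{SI,τ}_{Δ,α,q}` equals the restriction to `Δ` of the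
wired-wired measure `P^{SI,11}_{Δ,α,q}`. -/
theorem stmt_7 (m : ℕ) (hm : 4 ≤ m) (C : ZMod m → Vx) (hC : IsSimpleCircuit C)
    (α q : ℝ) (hα : 0 < α) (hq : 0 < q) (τ : SIConf) (hτ : NoClosedCross τ)
    (hτC : ∀ k : ZMod m, OpenCross τ (C k)) :
    Measure.map (fun η : SIConf => fun e : {e : Edge // e.1 ∈ insideOf C} => η e.1)
        (SIfin {e : Edge | e.1 ∈ insideOf C} α q τ) =
      Measure.map (fun η : SIConf => fun e : {e : Edge // e.1 ∈ insideOf C} => η e.1)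
        (SIfin {e : Edge | e.1 ∈ insideOf C} α q wiredwired) :=
  stmt_7_general m C hC α q τ hτ hτC

end SixVertex
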